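/- Let G be a finite group, p a prime, and P ≤ G an abelian radical p-subgroup. Then N_G(P) = N_G(C_G(P)). -/

import Mathlib

/-!
Let `C = C_G(P)`. Since `P` is abelian, `P ≤ Z(C)`, so `P` lies in `T = O_p(Z(C))`. This `T` is
characteristic in `C`, and `N_G(P)` normalizes `C`; hence `T` is a normal `p`-subgroup of `N_G(P)`
(note `C ≤ N_G(P)`), and radicality gives `T ≤ P`. Thus `P = T` is characteristic in `C`, so
`N_G(C) ≤ N_G(P)`.
-/

/-- The subgroup of `G` generated by all subgroups of `N` that are `p`-groups and
are normalized by `N`, i.e. `O_p(N)`, the largest normal `p`-subgroup of `N`. -/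
def relPCore (p : ℕ) {G : Type*} [Group G] (N : Subgroup G) : Subgroup G :=
  sSup {Q : Subgroup G | Q ≤ N ∧ IsPGroup p Q ∧ ∀ n ∈ N, ∀ x ∈ Q, n * x * n⁻¹ ∈ Q}

theorem le_relPCore {G : Type*} [Group G] (p : ℕ) {N Q : Subgroup G} (hQN : Q ≤ N)
    (hQ : IsPGroup p Q) (hNQ : N ≤ Subgroup.normalizer (Q : Set G)) : Q ≤ relPCore p N :=
  le_sSup ⟨hQN, hQ, Subgroup.le_normalizer_iff.mp hNQ⟩

namespace Subgroup

variable {G G' : Type*} [Group G] [Group G'] (p : ℕ)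

theorem normalizer_le_normalizer_centralizer (s : Set G) :
    normalizer s ≤ normalizer (centralizer s : Set G) := by
  refine le_normalizer_iff.mpr fun n hn c hc => ?_
  have := map_centralizer_le_centralizer_image s (MulAut.conj n : G →* G) ⟨c, hc, rfl⟩
  rwa [MonoidHom.coe_coe, mem_normalizer_iff_conj_image_eq.mp hn] at this

/-- `O_p(Z(H))`, realised as a subgroup of `G`. -/
def pCenter (H : Subgroup G) : Subgroup G where
  carrier := {g | g ∈ H ∧ g ∈ centralizer (H : Set G) ∧ ∃ k, g ^ p ^ k = 1}
  one_mem' := ⟨H.one_mem, one_mem _, 0, one_pow _⟩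
  mul_mem' := by
    rintro a b ⟨haH, haZ, k, hk⟩ ⟨hbH, hbZ, l, hl⟩
    refine ⟨mul_mem haH hbH, mul_mem haZ hbZ, k + l, ?_⟩
    rw [Commute.mul_pow (haZ b hbH).symm, pow_add, pow_mul, hk, one_pow, one_mul, pow_mul', hl,
      one_pow]
  inv_mem' := by
    rintro a ⟨haH, haZ, k, hk⟩
    exact ⟨inv_mem haH, inv_mem haZ, k, by rw [inv_pow, hk, inv_one]⟩

theorem pCenter_le (H : Subgroup G) : pCenter p H ≤ H := fun _ hg => hg.1

theorem isPGroup_pCenter (H : Subgroup G) : IsPGroup p (pCenter p H) := fun g =>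
  let ⟨k, hk⟩ := g.2.2.2
  ⟨k, Subtype.ext hk⟩

variable {p} in
theorem le_pCenter {H Q : Subgroup G} (hQ : IsPGroup p Q) (hQH : Q ≤ H)
    (hQC : Q ≤ centralizer (H : Set G)) : Q ≤ pCenter p H := fun g hg =>
  let ⟨k, hk⟩ := hQ ⟨g, hg⟩
  ⟨hQH hg, hQC hg, k, congrArg Subtype.val hk⟩

theorem map_pCenter_le (H : Subgroup G) (f : G →* G') :
    (pCenter p H).map f ≤ pCenter p (H.map f) := by
  rintro - ⟨g, ⟨hgH, hgZ, k, hk⟩, rfl⟩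
  refine ⟨mem_map_of_mem f hgH, ?_, k, by rw [← map_pow, hk, map_one]⟩
  exact map_centralizer_le_centralizer_image _ f (mem_map_of_mem f hgZ)

theorem normalizer_le_normalizer_pCenter (H : Subgroup G) :
    normalizer (H : Set G) ≤ normalizer (pCenter p H : Set G) := by
  refine le_normalizer_iff.mpr fun n hn x hx => ?_
  have := map_pCenter_le p H (MulAut.conj n : G →* G) ⟨x, hx, rfl⟩
  rwa [mem_normalizer_iff_map_conj_eq.mp hn] at this

end Subgroup

theorem stmt2_general {G : Type*} [Group G] (p : ℕ)
    (P : Subgroup G) (hP : IsPGroup p P)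
    (hab : ∀ x ∈ P, ∀ y ∈ P, x * y = y * x)
    (hrad : relPCore p (Subgroup.normalizer (P : Set G)) = P) :
    Subgroup.normalizer (P : Set G) = Subgroup.normalizer ((Subgroup.centralizer (P : Set G) : Subgroup G) : Set G) := by
  set C := Subgroup.centralizer (P : Set G)
  have hPC : P ≤ C := fun x hx y hy => hab y hy x hx
  have hNP : Subgroup.normalizer (P : Set G) ≤ Subgroup.normalizer (Subgroup.pCenter p C : Set G) :=
    (Subgroup.normalizer_le_normalizer_centralizer _).trans
      (Subgroup.normalizer_le_normalizer_pCenter p C)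
  have hTP : Subgroup.pCenter p C ≤ P := hrad ▸ le_relPCore p
    ((Subgroup.pCenter_le p C).trans (Subgroup.centralizer_le_normalizer _))
    (Subgroup.isPGroup_pCenter p C) hNP
  have hT : Subgroup.pCenter p C = P :=
    le_antisymm hTP (Subgroup.le_pCenter hP hPC (Subgroup.le_centralizer_iff.mpr le_rfl))
  refine le_antisymm (Subgroup.normalizer_le_normalizer_centralizer _) ?_
  simpa only [hT] using Subgroup.normalizer_le_normalizer_pCenter p C

/-- If `P` is an abelian radical `p`-subgroup of a finite group `G`,
then `N_G(P) = N_G(C_G(P))`. -/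
theorem stmt2 {G : Type*} [Group G] [Finite G] (p : ℕ) (hp : p.Prime)
    (P : Subgroup G) (hP : IsPGroup p P)
    (hab : ∀ x ∈ P, ∀ y ∈ P, x * y = y * x)
    (hrad : relPCore p (Subgroup.normalizer (P : Set G)) = P) :
    Subgroup.normalizer (P : Set G) = Subgroup.normalizer ((Subgroup.centralizer (P : Set G) : Subgroup G) : Set G) :=
  stmt2_general p P hP hab hrad
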